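/- (Weight-difference bound, key step in Lemma 3.2(i)) Let C > 0 satisfy ‖∇f(y^k) + β(x^{k+1} − y^k)‖_∞ < C for all k, let K, I* be as in the stable-support property (for k > K the support of x^k equals I*), and set C̄ = p(1−p)(pλ/C)^{(p−2)/(1−p)} and δ^k_i = √(ε^k_i). Then for all sufficiently large k, Σ_{i∈I*} |w_i^k − w_i^{k−1}| ≤ C̄ ( Σ_{i∈I*} |x_i^k − x_i^{k−1}| + 2 max_i δ_i^0 · (Σ_{i∈I*} δ_i^{k−1} − Σ_{i∈I*} δ_i^k) ). -/

import Mathlib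

open Filter
open scoped BigOperators InnerProductSpace

noncomputable section

/-- Real n-dimensional Euclidean space. -/
abbrev Vec (n : ℕ) := EuclideanSpace ℝ (Fin n)

/-- The smoothed objective `F(x, ε) = f(x) + λ ∑ᵢ (|xᵢ| + εᵢ)^p`. -/
def Fobj (n : ℕ) (p lam : ℝ) (f : Vec n → ℝ) (z : Vec n) (ε : Fin n → ℝ) : ℝ :=
  f z + lam * ∑ i, (|z i| + ε i) ^ p

/-- The merit function `ψ(x, y, ε) = F(x, ε) + (β/2)‖x − y‖²`. -/
def psiObj (n : ℕ) (p lam β : ℝ) (f : Vec n → ℝ) (z y : Vec n) (ε : Fin n → ℝ) : ℝ :=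
  Fobj n p lam f z ε + β / 2 * ‖z - y‖ ^ 2

/-- The weighted-ℓ₁ subproblem objective at iteration `k`:
`⟨∇f(yₖ), z⟩ + (β/2)‖z − yₖ‖² + λ ∑ᵢ wᵢᵏ |zᵢ|` with `wᵢᵏ = p(|xᵢᵏ| + εᵢᵏ)^{p−1}`. -/
def subObj (n : ℕ) (p lam β : ℝ) (f : Vec n → ℝ) (xk yk : Vec n) (εk : Fin n → ℝ)
    (z : Vec n) : ℝ :=
  ⟪gradient f yk, z⟫_ℝ + β / 2 * ‖z - yk‖ ^ 2
    + lam * ∑ i, (p * (|xk i| + εk i) ^ (p - 1)) * |z i|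

/-- All the hypotheses of the EIRL1 algorithm (Algorithm 1) together with
Assumption 2.1.  The convention `x⁻¹ = x⁰` is encoded through truncated
subtraction on ℕ (`x (k-1) = x 0` for `k = 0`). -/
structure EIRL1 (n : ℕ) (p lam β Lf μ αbar : ℝ) (f : Vec n → ℝ)
    (x y : ℕ → Vec n) (ε : ℕ → Fin n → ℝ) (α : ℕ → ℝ) : Prop where
  hn : 1 ≤ n
  hp0 : 0 < p
  hp1 : p < 1
  hlam : 0 < lam
  hμ0 : 0 < μ
  hμ1 : μ < 1
  hLf : 0 ≤ Lf
  hβ : Lf < β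
  hconv : ConvexOn ℝ Set.univ f
  hdiff : ContDiff ℝ 1 f
  hlip : ∀ a b, ‖gradient f a - gradient f b‖ ≤ Lf * ‖a - b‖
  hαbar0 : 0 ≤ αbar
  hαbar1 : αbar < 1
  hα0 : ∀ k, 0 ≤ α k
  hα1 : ∀ k, α k ≤ αbar
  hε0 : ∀ i, 0 < ε 0 i
  hεpos : ∀ k i, 0 < ε (k + 1) i
  hεdec : ∀ k i, ε (k + 1) i ≤ μ * ε k i
  hy : ∀ k, y k = x k + α k • (x k - x (k - 1))
  hmin : ∀ k z, z ≠ x (k + 1) →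
    subObj n p lam β f (x k) (y k) (ε k) (x (k + 1)) < subObj n p lam β f (x k) (y k) (ε k) z
  hlevel : Bornology.IsBounded {z : Vec n | Fobj n p lam f z 0 ≤ Fobj n p lam f (x 0) (ε 0)}

/-!
On the stable support the optimality condition of the weighted-ℓ₁ subproblem at a nonzero
coordinate reads `λ wᵢᵏ = |∇f(yᵏ)ᵢ + β(xᵢᵏ⁺¹ − yᵢᵏ)| < C`, which bounds the smoothed magnitudes
`|xᵢᵏ| + εᵢᵏ` below by `r = (pλ/C)^{1/(1−p)}`. On `[r, ∞)` the map `u ↦ p u^{p−1}` is Lipschitz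
with constant `p(1−p) r^{p−2} = C̄`, and the decrease of the smoothing parameters is converted
into square roots by `εᵢᵏ⁻¹ − εᵢᵏ = (δᵢᵏ⁻¹ + δᵢᵏ)(δᵢᵏ⁻¹ − δᵢᵏ) ≤ 2 maxⱼ δⱼ⁰ (δᵢᵏ⁻¹ − δᵢᵏ)`.
-/

lemma subObj_add_single {n : ℕ} (p lam β : ℝ) (f : Vec n → ℝ) (xk yk : Vec n)
    (εk : Fin n → ℝ) (z : Vec n) (i : Fin n) (t : ℝ) :
    subObj n p lam β f xk yk εk (z + t • EuclideanSpace.single i 1)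
      = subObj n p lam β f xk yk εk z + t * (gradient f yk i + β * (z i - yk i))
        + β / 2 * t ^ 2 + lam * (p * (|xk i| + εk i) ^ (p - 1)) * (|z i + t| - |z i|) := by
  have hinner : ⟪gradient f yk, z + t • EuclideanSpace.single i 1⟫_ℝ
      = ⟪gradient f yk, z⟫_ℝ + t * gradient f yk i := by
    rw [inner_add_right, real_inner_smul_right, EuclideanSpace.inner_single_right]
    simp
  have hnorm : ‖z + t • EuclideanSpace.single i 1 - yk‖ ^ 2
      = ‖z - yk‖ ^ 2 + 2 * (t * (z i - yk i)) + t ^ 2 := by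
    rw [add_sub_right_comm, norm_add_sq_real, real_inner_smul_right,
      EuclideanSpace.inner_single_right, norm_smul, PiLp.norm_single]
    simp [sq_abs]
  have hsum : ∑ j, p * (|xk j| + εk j) ^ (p - 1) * |(z + t • EuclideanSpace.single i 1 : Vec n) j|
      = ∑ j, p * (|xk j| + εk j) ^ (p - 1) * |z j|
        + p * (|xk i| + εk i) ^ (p - 1) * (|z i + t| - |z i|) := by
    rw [← sub_eq_iff_eq_add', ← Finset.sum_sub_distrib, Finset.sum_eq_single i]
    · simp [mul_sub]
    · intro j _ hj
      simp [hj]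
    · simp
  unfold subObj
  rw [hinner, hnorm, hsum]
  ring

lemma abs_sub_rpow_le {q r a b : ℝ} (hq : q ≤ 1) (hr : 0 < r) (ha : r ≤ a) (hb : r ≤ b) :
    |a ^ q - b ^ q| ≤ |q| * r ^ (q - 1) * |a - b| := by
  have hderiv : ∀ t ∈ Set.Ici r,
      HasDerivWithinAt (fun u : ℝ => u ^ q) (q * t ^ (q - 1)) (Set.Ici r) t := fun t ht =>
    (Real.hasDerivAt_rpow_const (Or.inl (hr.trans_le ht).ne')).hasDerivWithinAt
  have hbound : ∀ t ∈ Set.Ici r, ‖q * t ^ (q - 1)‖ ≤ |q| * r ^ (q - 1) := by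
    intro t ht
    rw [Real.norm_eq_abs, abs_mul, abs_of_pos (Real.rpow_pos_of_pos (hr.trans_le ht) _)]
    exact mul_le_mul_of_nonneg_left
      (Real.rpow_le_rpow_of_nonpos hr ht (by linarith)) (abs_nonneg q)
  simpa [Real.norm_eq_abs] using
    (convex_Ici r).norm_image_sub_le_of_norm_hasDerivWithin_le hderiv hbound hb ha

lemma le_of_mul_rpow_lt {p c C u : ℝ} (hp : p < 1) (hc : 0 < c) (hC : 0 < C) (hu : 0 < u)
    (h : c * u ^ (p - 1) < C) : (c / C) ^ (1 / (1 - p)) ≤ u := by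
  have hcC : 0 < c / C := div_pos hc hC
  have h1p : 1 - p ≠ 0 := by linarith
  have hr : ((c / C) ^ (1 / (1 - p))) ^ (p - 1) = C / c := by
    rw [← Real.rpow_mul hcC.le, show 1 / (1 - p) * (p - 1) = -1 by field_simp; ring,
      Real.rpow_neg_one, inv_div]
  by_contra! hlt
  have := Real.rpow_le_rpow_of_nonpos hu hlt.le (by linarith : p - 1 ≤ 0)
  rw [hr, div_le_iff₀ hc] at this
  linarith

lemma sub_le_two_mul_mul_sqrt_sub {a b M : ℝ} (hb : 0 ≤ b) (hba : b ≤ a) (ha : √a ≤ M) :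
    a - b ≤ 2 * M * (√a - √b) := by
  have hsqrt : √b ≤ √a := Real.sqrt_le_sqrt hba
  have hfactor : a - b = (√a + √b) * (√a - √b) := by
    rw [← sq_sub_sq, Real.sq_sqrt (hb.trans hba), Real.sq_sqrt hb]
  rw [hfactor]
  exact mul_le_mul_of_nonneg_right (by linarith) (by linarith)

lemma abs_grad_eq_weight_of_isMin {n : ℕ} {p lam β : ℝ} {f : Vec n → ℝ} {xk yk z : Vec n}
    {εk : Fin n → ℝ} {i : Fin n}
    (hmin : ∀ v, subObj n p lam β f xk yk εk z ≤ subObj n p lam β f xk yk εk v)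
    (hw : 0 ≤ lam * (p * (|xk i| + εk i) ^ (p - 1))) (hz : z i ≠ 0) :
    |gradient f yk i + β * (z i - yk i)| = lam * (p * (|xk i| + εk i) ^ (p - 1)) := by
  set B := gradient f yk i + β * (z i - yk i)
  set c := lam * (p * (|xk i| + εk i) ^ (p - 1))
  set h : ℝ → ℝ := fun t => t * B + β / 2 * t ^ 2 + c * (|z i + t| - |z i|)
  have hlocal : IsLocalMin h 0 := Filter.Eventually.of_forall fun t => by
    have := hmin (z + t • EuclideanSpace.single i 1)
    rw [subObj_add_single] at this
    change _ ≤ _ + t * B + β / 2 * t ^ 2 + c * _ at this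
    norm_num [h]
    linarith
  have hderiv : HasDerivAt h (B + c * SignType.sign (z i)) 0 := by
    have habs : HasDerivAt (fun t => |z i + t|) (SignType.sign (z i) : ℝ) 0 := by
      simpa using (hasDerivAt_abs (by simpa using hz)).comp_const_add (z i) 0
    exact ((((hasDerivAt_id' 0).mul_const B).add ((hasDerivAt_pow 2 0).const_mul (β / 2))).add
      ((habs.sub_const |z i|).const_mul c)).congr_deriv (by simp)
  have hcrit : B = -(c * SignType.sign (z i)) :=
    eq_neg_of_add_eq_zero_left (hlocal.hasDerivAt_eq_zero hderiv)
  rw [hcrit, abs_neg, abs_mul, abs_of_nonneg hw]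
  rcases hz.lt_or_gt with hz | hz <;> simp [hz]

lemma abs_weight_sub_le {p r u v e e' M : ℝ} (hp0 : 0 ≤ p) (hp1 : p < 1) (hr : 0 < r)
    (hu : r ≤ |u| + e) (hv : r ≤ |v| + e') (he : 0 ≤ e) (hee' : e ≤ e') (hM : √e' ≤ M) :
    |p * (|u| + e) ^ (p - 1) - p * (|v| + e') ^ (p - 1)|
      ≤ p * (1 - p) * r ^ (p - 2) * (|u - v| + 2 * M * (√e' - √e)) := by
  have hbase : |(|u| + e) - (|v| + e')| ≤ |u - v| + 2 * M * (√e' - √e) :=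
    calc |(|u| + e) - (|v| + e')| ≤ |(|u| - |v|)| + |e - e'| := by
          rw [add_sub_add_comm]; exact abs_add_le _ _
      _ ≤ |u - v| + (e' - e) := by
          rw [abs_sub_comm e, abs_of_nonneg (sub_nonneg.2 hee')]
          linarith [abs_abs_sub_abs_le_abs_sub u v]
      _ ≤ |u - v| + 2 * M * (√e' - √e) := by
          gcongr
          exact sub_le_two_mul_mul_sqrt_sub he hee' hM
  have hlip := abs_sub_rpow_le (by linarith : p - 1 ≤ 1) hr hu hv
  rw [abs_of_nonpos (by linarith : p - 1 ≤ 0), show p - 1 - 1 = p - 2 by ring] at hlip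
  calc |p * (|u| + e) ^ (p - 1) - p * (|v| + e') ^ (p - 1)|
      = p * |(|u| + e) ^ (p - 1) - (|v| + e') ^ (p - 1)| := by
        rw [← mul_sub, abs_mul, abs_of_nonneg hp0]
    _ ≤ p * ((1 - p) * r ^ (p - 2) * (|u - v| + 2 * M * (√e' - √e))) := by
        gcongr
        calc _ ≤ -(p - 1) * r ^ (p - 2) * |(|u| + e) - (|v| + e')| := hlip
          _ ≤ _ := by rw [neg_sub]; gcongr
    _ = _ := by ring

namespace EIRL1

variable {n : ℕ} {p lam β Lf μ αbar : ℝ} {f : Vec n → ℝ} {x y : ℕ → Vec n}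
  {ε : ℕ → Fin n → ℝ} {α : ℕ → ℝ}

lemma eps_pos (H : EIRL1 n p lam β Lf μ αbar f x y ε α) (k : ℕ) (i : Fin n) : 0 < ε k i := by
  cases k with
  | zero => exact H.hε0 i
  | succ k => exact H.hεpos k i

lemma antitone_eps (H : EIRL1 n p lam β Lf μ αbar f x y ε α) (i : Fin n) :
    Antitone fun k => ε k i :=
  antitone_nat_of_succ_le fun k =>
    (H.hεdec k i).trans (mul_le_of_le_one_left (H.eps_pos k i).le H.hμ1.le)

lemma abs_grad_eq_weight (H : EIRL1 n p lam β Lf μ αbar f x y ε α) {k : ℕ} {i : Fin n}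
    (hx : x (k + 1) i ≠ 0) :
    |gradient f (y k) i + β * (x (k + 1) i - y k i)|
      = lam * (p * (|x k i| + ε k i) ^ (p - 1)) := by
  refine abs_grad_eq_weight_of_isMin (fun v => ?_) ?_ hx
  · rcases eq_or_ne v (x (k + 1)) with rfl | hv
    exacts [le_rfl, (H.hmin k v hv).le]
  · have := H.hp0; have := H.hlam
    have := H.eps_pos k i
    positivity

lemma rpow_le_abs_add_eps (H : EIRL1 n p lam β Lf μ αbar f x y ε α) {C : ℝ} (hC0 : 0 < C)
    (hC : ∀ k, ∀ i, |gradient f (y k) i + β * (x (k + 1) i - y k i)| < C) {k : ℕ} {i : Fin n}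
    (hx : x (k + 1) i ≠ 0) : (p * lam / C) ^ (1 / (1 - p)) ≤ |x k i| + ε k i := by
  refine le_of_mul_rpow_lt H.hp1 (mul_pos H.hp0 H.hlam) hC0
    (add_pos_of_nonneg_of_pos (abs_nonneg _) (H.eps_pos k i)) ?_
  rw [mul_comm p, mul_assoc, ← H.abs_grad_eq_weight hx]
  exact hC k i

end EIRL1

theorem stmt_13_general (n : ℕ) (p lam β Lf μ αbar : ℝ) (f : Vec n → ℝ)
    (x y : ℕ → Vec n) (ε : ℕ → Fin n → ℝ) (α : ℕ → ℝ)
    (H : EIRL1 n p lam β Lf μ αbar f x y ε α)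
    (C : ℝ)
    (hC : ∀ k, ∀ i, |gradient f (y k) i + β * (x (k + 1) i - y k i)| < C)
    (K : ℕ) (Istar : Finset (Fin n))
    (hsupp : ∀ k > K, ∀ i, i ∈ Istar ↔ x k i ≠ 0) :
    ∃ N : ℕ, ∀ k ≥ N,
      ∑ i ∈ Istar,
          |p * (|x k i| + ε k i) ^ (p - 1) - p * (|x (k - 1) i| + ε (k - 1) i) ^ (p - 1)|
        ≤ p * (1 - p) * (p * lam / C) ^ ((p - 2) / (1 - p)) *
            (∑ i ∈ Istar, |x k i - x (k - 1) i|
              + 2 * (⨆ i : Fin n, Real.sqrt (ε 0 i)) *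
                  (∑ i ∈ Istar, Real.sqrt (ε (k - 1) i) - ∑ i ∈ Istar, Real.sqrt (ε k i))) := by
  have hC0 : 0 < C := (abs_nonneg _).trans_lt (hC 0 ⟨0, H.hn⟩)
  have hbase : 0 < p * lam / C := div_pos (mul_pos H.hp0 H.hlam) hC0
  set r := (p * lam / C) ^ (1 / (1 - p))
  have hr : 0 < r := Real.rpow_pos_of_pos hbase _
  have hr_pow : r ^ (p - 2) = (p * lam / C) ^ ((p - 2) / (1 - p)) := by
    rw [← Real.rpow_mul hbase.le, one_div_mul_eq_div]
  have hlow : ∀ k ≥ K, ∀ i ∈ Istar, r ≤ |x k i| + ε k i := fun k hk i hi =>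
    H.rpow_le_abs_add_eps hC0 hC ((hsupp (k + 1) (by omega) i).1 hi)
  have hsqrt : ∀ k i, √(ε k i) ≤ ⨆ j, √(ε 0 j) := fun k i =>
    (Real.sqrt_le_sqrt (H.antitone_eps i k.zero_le)).trans
      (le_ciSup (f := fun j => √(ε 0 j)) (Set.finite_range _).bddAbove i)
  refine ⟨K + 1, fun k hk => ?_⟩
  obtain ⟨m, rfl⟩ : ∃ m, k = m + 1 := ⟨k - 1, by omega⟩
  rw [Nat.add_sub_cancel, ← hr_pow]
  calc _ ≤ ∑ i ∈ Istar, p * (1 - p) * r ^ (p - 2) * (|x (m + 1) i - x m i|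
          + 2 * (⨆ j, √(ε 0 j)) * (√(ε m i) - √(ε (m + 1) i))) :=
        Finset.sum_le_sum fun i hi => abs_weight_sub_le H.hp0.le H.hp1 hr
          (hlow _ (by omega) i hi) (hlow m (by omega) i hi) (H.eps_pos _ i).le
          (H.antitone_eps i m.le_succ) (hsqrt m i)
    _ = _ := by
        rw [← Finset.mul_sum, Finset.sum_add_distrib, ← Finset.mul_sum, Finset.sum_sub_distrib]

/-- Weight-difference bound (key step in Lemma 3.2(i)):
`∑_{i∈I*} |wᵢᵏ − wᵢᵏ⁻¹| ≤ C̄ (∑_{i∈I*} |xᵢᵏ − xᵢᵏ⁻¹| + 2 maxᵢ δᵢ⁰ (∑_{i∈I*} δᵢᵏ⁻¹ − ∑_{i∈I*} δᵢᵏ))`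
for all sufficiently large `k`, where `δᵢᵏ = √εᵢᵏ` and
`C̄ = p(1−p)(pλ/C)^{(p−2)/(1−p)}`. -/
theorem stmt_13 (n : ℕ) (p lam β Lf μ αbar : ℝ) (f : Vec n → ℝ)
    (x y : ℕ → Vec n) (ε : ℕ → Fin n → ℝ) (α : ℕ → ℝ)
    (H : EIRL1 n p lam β Lf μ αbar f x y ε α)
    (C : ℝ) (hC0 : 0 < C)
    (hC : ∀ k, ∀ i, |gradient f (y k) i + β * (x (k + 1) i - y k i)| < C)
    (K : ℕ) (Istar : Finset (Fin n))
    (hsupp : ∀ k > K, ∀ i, i ∈ Istar ↔ x k i ≠ 0) :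
    ∃ N : ℕ, ∀ k ≥ N,
      ∑ i ∈ Istar,
          |p * (|x k i| + ε k i) ^ (p - 1) - p * (|x (k - 1) i| + ε (k - 1) i) ^ (p - 1)|
        ≤ p * (1 - p) * (p * lam / C) ^ ((p - 2) / (1 - p)) *
            (∑ i ∈ Istar, |x k i - x (k - 1) i|
              + 2 * (⨆ i : Fin n, Real.sqrt (ε 0 i)) *
                  (∑ i ∈ Istar, Real.sqrt (ε (k - 1) i) - ∑ i ∈ Istar, Real.sqrt (ε k i))) :=
  stmt_13_general n p lam β Lf μ αbar f x y ε α H C hC K Istar hsupp
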